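/- Let U be an open ball in ℝⁿ centered at the origin, m ∈ ℕ, 0 < α ≤ 1, and let f ∈ C^m(U). Suppose there are constants c_δ ≥ 0, for each multi-index δ with |δ| = m, such that |∂^δ f(x) − ∂^δ f(0)| ≤ c_δ ‖x‖^α for all x ∈ U. Then for every multi-index β with |β| ≤ m and every x ∈ U, |∂^β ( f − T_m(f) )(x)| ≤ ‖x‖^{m+α−|β|} · Σ_{|γ| = m−|β|} (1/γ!) c_{γ+β}, where the sum ranges over multi-indices γ with |γ| = m − |β|. -/

import Mathlib

/-!
Write `R = f - T_m f`. Then `∂^β R(0) = 0` for `|β| ≤ m`, and for `|β| = m` the derivative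
`∂^β T_m f` is the constant `∂^β f(0)`, so the hypothesis is the claim itself. The other orders
follow by descending induction on `k = m - |β|`. Along the segment `t ↦ t x` we have
`d/dt ∂^β R(t x) = Σᵢ xᵢ ∂^{β+eᵢ} R(t x)` (partial derivatives commute on `Cᵐ`), which the
induction hypothesis bounds by `‖x‖^{k+1+α} t^{k+α} Σᵢ C_k(β+eᵢ)`, where
`C_k(β) = Σ_{|γ|=k} c_{γ+β}/γ!`. Integrating over `[0,1]` gives the factor `1/(k+1+α) ≤ 1/(k+1)`,
and reindexing by `γ ↦ γ + eᵢ` shows that `Σᵢ C_k(β+eᵢ) = (k+1) C_{k+1}(β)`.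
-/

noncomputable section

/-- ℝⁿ with the Euclidean norm. -/
abbrev En (n : ℕ) := EuclideanSpace ℝ (Fin n)

/-- The `i`-th partial derivative of a function on ℝⁿ. -/
def pd {n : ℕ} (i : Fin n) (f : En n → ℝ) : En n → ℝ :=
  fun x => fderiv ℝ f x (EuclideanSpace.single i 1)

/-- The partial derivative `∂^β` associated with a multi-index `β`. -/
def pdM {n : ℕ} (β : Fin n → ℕ) (f : En n → ℝ) : En n → ℝ :=
  (List.ofFn (fun i : Fin n => (pd i)^[β i])).foldr (· ∘ ·) id f

/-- The finset of multi-indices `β` with `|β| ≤ m`. -/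
def multiIdx (n m : ℕ) : Finset (Fin n → ℕ) :=
  (Fintype.piFinset fun _ : Fin n => Finset.range (m + 1)).filter fun β => ∑ i, β i ≤ m

/-- The Taylor polynomial of order `m` of `f` at the origin:
`T_m(f)(x) = Σ_{|β| ≤ m} (1/β!) ∂^β f(0) x^β`. -/
def taylorPoly {n : ℕ} (m : ℕ) (f : En n → ℝ) : En n → ℝ :=
  fun x => ∑ β ∈ multiIdx n m,
    (∏ i, (Nat.factorial (β i) : ℝ))⁻¹ * pdM β f 0 * ∏ i, x i ^ β i

lemma tsub_single_add_single {ι : Type*} [DecidableEq ι] {β : ι → ℕ} {i : ι} (hi : β i ≠ 0) :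
    β - Pi.single i 1 + Pi.single i 1 = β :=
  tsub_add_cancel_of_le fun j => by
    rcases eq_or_ne j i with rfl | hj
    · simpa [Nat.one_le_iff_ne_zero]
    · simp [hj]

section MultiIndex

variable {ι : Type*} [Fintype ι] [DecidableEq ι]

lemma sum_add_single (β : ι → ℕ) (i : ι) :
    ∑ j, (β + Pi.single i 1 : ι → ℕ) j = ∑ j, β j + 1 := by
  simp [Finset.sum_add_distrib]

theorem multiIndex_induction {P : (ι → ℕ) → Prop} (zero : P 0)
    (add_single : ∀ β i, P β → P (β + Pi.single i 1)) (β : ι → ℕ) : P β := by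
  induction h : ∑ i, β i generalizing β with
  | zero =>
    obtain rfl : β = 0 := funext fun i => (Finset.sum_eq_zero_iff.1 h) i (Finset.mem_univ i)
    exact zero
  | succ k ih =>
    obtain ⟨i, hi⟩ : ∃ i, β i ≠ 0 := by
      by_contra! h0
      simp [h0] at h
    rw [← tsub_single_add_single hi]
    refine add_single _ i (ih _ ?_)
    have := sum_add_single (β - Pi.single i 1) i
    rw [tsub_single_add_single hi] at this
    omega

lemma prod_apply_eq_mul_prod_erase {M : Type*} [CommMonoid M] (F : ι → ℕ → M) {β γ : ι → ℕ}
    (i : ι) (h : ∀ j ≠ i, γ j = β j) :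
    ∏ j, F j (γ j) = F i (γ i) * ∏ j ∈ Finset.univ.erase i, F j (β j) := by
  rw [← Finset.mul_prod_erase _ _ (Finset.mem_univ i)]
  exact congrArg _ (Finset.prod_congr rfl fun j hj => by rw [h j (Finset.ne_of_mem_erase hj)])

end MultiIndex

variable {n : ℕ}

-- Words of coordinates turn Schwarz's theorem into invariance under permutations (`pdList_perm`).
def pdList (L : List (Fin n)) (f : En n → ℝ) : En n → ℝ := L.foldr pd f

def indexList (β : Fin n → ℕ) : List (Fin n) :=
  (List.finRange n).flatMap fun i => List.replicate (β i) i

lemma length_indexList (β : Fin n → ℕ) : (indexList β).length = ∑ i, β i := by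
  simp [indexList, List.length_flatMap, ← Fin.sum_univ_def]

lemma count_indexList (β : Fin n → ℕ) (i : Fin n) : (indexList β).count i = β i := by
  simp [indexList, List.count_flatMap, List.count_replicate, Function.comp_def, ← Fin.sum_univ_def]

lemma pdList_replicate (k : ℕ) (i : Fin n) (f : En n → ℝ) :
    pdList (List.replicate k i) f = (pd i)^[k] f := by
  induction k with
  | zero => rfl
  | succ k ih =>
    rw [List.replicate_succ, Function.iterate_succ_apply', ← ih]
    rfl

lemma pdM_eq_pdList (β : Fin n → ℕ) (f : En n → ℝ) : pdM β f = pdList (indexList β) f := by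
  rw [pdM, indexList, List.ofFn_eq_map]
  induction List.finRange n with
  | nil => rfl
  | cons i l ih =>
    simp only [List.map_cons, List.foldr_cons, List.flatMap_cons, Function.comp_apply, ih]
    exact (pdList_replicate _ _ _).symm.trans (List.foldr_append ..).symm

lemma pdM_zero (f : En n → ℝ) : pdM 0 f = f := by
  rw [pdM_eq_pdList, show indexList (0 : Fin n → ℕ) = [] by simp [indexList]]
  rfl

section Smooth

variable {U : Set (En n)} {f g : En n → ℝ}

lemma ContDiffOn.pd {k : ℕ} (hU : IsOpen U) (hf : ContDiffOn ℝ (k + 1 : ℕ) f U) (i : Fin n) :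
    ContDiffOn ℝ k (pd i f) U :=
  (hf.fderiv_of_isOpen hU (by push_cast; rfl)).clm_apply contDiffOn_const

lemma pdList_contDiffOn {k : ℕ} (hU : IsOpen U) (L : List (Fin n))
    (hf : ContDiffOn ℝ (L.length + k : ℕ) f U) : ContDiffOn ℝ k (pdList L f) U := by
  induction L generalizing k with
  | nil => simpa [pdList] using hf
  | cons i L ih =>
    refine ContDiffOn.pd hU (ih ?_) i
    rwa [List.length_cons, add_right_comm, add_assoc] at hf

lemma pdM_contDiffOn {k : ℕ} (hU : IsOpen U) (β : Fin n → ℕ)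
    (hf : ContDiffOn ℝ (∑ i, β i + k : ℕ) f U) : ContDiffOn ℝ k (pdM β f) U := by
  rw [pdM_eq_pdList]
  exact pdList_contDiffOn hU _ (by rwa [length_indexList])

lemma pdM_differentiableAt (hU : IsOpen U) (β : Fin n → ℕ)
    (hf : ContDiffOn ℝ (∑ i, β i + 1 : ℕ) f U) {x : En n} (hx : x ∈ U) :
    DifferentiableAt ℝ (pdM β f) x :=
  ((pdM_contDiffOn hU β hf).differentiableOn one_ne_zero x hx).differentiableAt
    (hU.mem_nhds hx)

lemma pd_congr (hU : IsOpen U) (h : Set.EqOn f g U) (i : Fin n) :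
    Set.EqOn (pd i f) (pd i g) U := fun x hx => by
  simp only [pd, (Filter.eventuallyEq_of_mem (hU.mem_nhds hx) h).fderiv_eq]

lemma pd_pd_comm {x : En n} (hf : ContDiffAt ℝ 2 f x) (i j : Fin n) :
    pd i (pd j f) x = pd j (pd i f) x := by
  have hdiff : DifferentiableAt ℝ (fderiv ℝ f) x :=
    (hf.fderiv_right (m := 1) le_rfl).differentiableAt one_ne_zero
  have hsecond : ∀ v w : Fin n, pd v (pd w f) x =
      fderiv ℝ (fderiv ℝ f) x (EuclideanSpace.single v 1) (EuclideanSpace.single w 1) := by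
    intro v w
    change fderiv ℝ (fun y => fderiv ℝ f y (EuclideanSpace.single w 1)) x _ = _
    simp [fderiv_clm_apply hdiff (differentiableAt_const _)]
  rw [hsecond, hsecond, hf.isSymmSndFDerivAt (by simp)]

lemma pdList_perm (hU : IsOpen U) {L₁ L₂ : List (Fin n)} (hp : L₁.Perm L₂)
    (hf : ContDiffOn ℝ L₁.length f U) : Set.EqOn (pdList L₁ f) (pdList L₂ f) U := by
  induction hp with
  | nil => exact Set.eqOn_refl _ _
  | cons i _ ih => exact pd_congr hU (ih (hf.of_le (by simp))) i
  | swap i j L =>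
    intro x hx
    have hL : ContDiffOn ℝ (L.length + 2 : ℕ) f U := by
      simpa [add_assoc, one_add_one_eq_two] using hf
    exact pd_pd_comm ((pdList_contDiffOn hU L hL x hx).contDiffAt (hU.mem_nhds hx)) j i
  | trans h₁₂ _ ih₁₂ ih₂₃ => exact (ih₁₂ hf).trans (ih₂₃ (h₁₂.length_eq ▸ hf))

lemma indexList_add_single_perm (β : Fin n → ℕ) (i : Fin n) :
    (indexList (β + Pi.single i 1)).Perm (i :: indexList β) := by
  refine List.perm_iff_count.2 fun j => ?_
  rcases eq_or_ne j i with rfl | hj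
  · simp [count_indexList]
  · simp [count_indexList, hj, Ne.symm hj]

lemma pdM_add_single (hU : IsOpen U) (β : Fin n → ℕ) (i : Fin n)
    (hf : ContDiffOn ℝ (∑ j, β j + 1 : ℕ) f U) :
    Set.EqOn (pdM (β + Pi.single i 1) f) (pd i (pdM β f)) U := by
  rw [pdM_eq_pdList, pdM_eq_pdList]
  exact pdList_perm hU (indexList_add_single_perm β i)
    (by rwa [length_indexList, sum_add_single])

end Smooth

section Algebra

variable {U : Set (En n)} {f g : En n → ℝ}

lemma pd_sub {x : En n} (hf : DifferentiableAt ℝ f x) (hg : DifferentiableAt ℝ g x) (i : Fin n) :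
    pd i (fun y => f y - g y) x = pd i f x - pd i g x := by
  simp [pd, fderiv_fun_sub hf hg]

lemma pd_sum_mul {ι : Type*} (s : Finset ι) (a : ι → ℝ) (g : ι → En n → ℝ) {x : En n}
    (hg : ∀ j ∈ s, DifferentiableAt ℝ (g j) x) (i : Fin n) :
    pd i (fun y => ∑ j ∈ s, a j * g j y) x = ∑ j ∈ s, a j * pd i (g j) x := by
  rw [pd, fderiv_fun_sum fun j hj => (hg j hj).const_mul (a j), _root_.sum_apply]
  refine Finset.sum_congr rfl fun j hj => ?_
  simp [fderiv_const_mul (hg j hj), pd]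

lemma pdM_sub (hU : IsOpen U) (β : Fin n → ℕ) (hf : ContDiffOn ℝ (∑ i, β i : ℕ) f U)
    (hg : ContDiffOn ℝ (∑ i, β i : ℕ) g U) {x : En n} (hx : x ∈ U) :
    pdM β (fun y => f y - g y) x = pdM β f x - pdM β g x := by
  induction β using multiIndex_induction generalizing x with
  | zero => simp only [pdM_zero]
  | add_single β i ih =>
    rw [sum_add_single] at hf hg
    rw [pdM_add_single hU β i (hf.sub hg) hx,
      pd_congr hU (fun y hy => ih (hf.of_le (by simp)) (hg.of_le (by simp)) hy) i hx,
      pd_sub (pdM_differentiableAt hU β hf hx) (pdM_differentiableAt hU β hg hx),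
      pdM_add_single hU β i hf hx, pdM_add_single hU β i hg hx]

end Algebra

lemma prod_descFactorial_add_single (δ β : Fin n → ℕ) (i : Fin n) :
    ∏ k, (δ k).descFactorial ((β + Pi.single i 1 : Fin n → ℕ) k) =
      (δ i - β i) * ∏ k, (δ k).descFactorial (β k) := by
  rw [prod_apply_eq_mul_prod_erase (fun k m => (δ k).descFactorial m) i (β := β)
    (fun j hj => by simp [hj]), ← Finset.mul_prod_erase _ _ (Finset.mem_univ i)]
  simp [Nat.descFactorial_succ, mul_assoc]

def monomialFn (δ : Fin n → ℕ) : En n → ℝ := fun x => ∏ i, x i ^ δ i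

lemma contDiff_monomialFn {k : WithTop ℕ∞} (δ : Fin n → ℕ) : ContDiff ℝ k (monomialFn δ) :=
  contDiff_prod fun i _ => (EuclideanSpace.proj (𝕜 := ℝ) i).contDiff.pow (δ i)

lemma pd_monomialFn (δ : Fin n → ℕ) (i : Fin n) :
    pd i (monomialFn δ) = fun x => δ i * monomialFn (δ - Pi.single i 1) x := by
  funext x
  have hderiv : HasFDerivAt (monomialFn δ) (∑ j, (∏ k ∈ Finset.univ.erase j, x k ^ δ k) •
      ((δ j * x j ^ (δ j - 1)) • EuclideanSpace.proj j)) x :=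
    HasFDerivAt.finsetProd fun j _ =>
      (hasDerivAt_pow (δ j) (x j)).comp_hasFDerivAt x (EuclideanSpace.proj (𝕜 := ℝ) j).hasFDerivAt
  rw [pd, hderiv.fderiv, monomialFn,
    prod_apply_eq_mul_prod_erase (fun k m => x k ^ m) i (β := δ) (fun j hj => by simp [hj])]
  simp only [sum_apply, smul_apply, PiLp.proj_apply, PiLp.single_apply,
    smul_eq_mul, mul_ite, mul_one, mul_zero, Finset.sum_ite_eq', Finset.mem_univ, ↓reduceIte,
    Pi.sub_apply, Pi.single_eq_same]
  ring

lemma pdM_sum_mul_monomialFn (s : Finset (Fin n → ℕ)) (a : (Fin n → ℕ) → ℝ) (β : Fin n → ℕ) :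
    pdM β (fun x => ∑ δ ∈ s, a δ * monomialFn δ x) = fun x => ∑ δ ∈ s,
      a δ * (∏ k, (δ k).descFactorial (β k) : ℕ) * monomialFn (δ - β) x := by
  induction β using multiIndex_induction with
  | zero => simp [pdM_zero]
  | add_single β i ih =>
    have hsmooth : ContDiff ℝ (∑ j, β j + 1 : ℕ) fun x => ∑ δ ∈ s, a δ * monomialFn δ x :=
      ContDiff.sum fun δ _ => contDiff_const.mul (contDiff_monomialFn δ)
    funext x
    rw [pdM_add_single isOpen_univ β i hsmooth.contDiffOn (Set.mem_univ x), ih,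
      pd_sum_mul _ _ _ fun δ _ => (contDiff_monomialFn (k := 1) _).differentiable one_ne_zero x]
    refine Finset.sum_congr rfl fun δ _ => ?_
    rw [pd_monomialFn, prod_descFactorial_add_single, tsub_tsub, Pi.sub_apply]
    push_cast
    ring

lemma pdM_taylorPoly (β : Fin n → ℕ) (m : ℕ) (f : En n → ℝ) :
    pdM β (taylorPoly m f) = fun x => ∑ δ ∈ multiIdx n m,
      (∏ i, ((δ i).factorial : ℝ))⁻¹ * pdM δ f 0 * (∏ k, (δ k).descFactorial (β k) : ℕ) *
        monomialFn (δ - β) x :=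
  pdM_sum_mul_monomialFn _ _ β

lemma contDiff_taylorPoly {k : WithTop ℕ∞} (m : ℕ) (f : En n → ℝ) :
    ContDiff ℝ k (taylorPoly m f) :=
  ContDiff.sum fun δ _ => contDiff_const.mul (contDiff_monomialFn δ)

lemma prod_descFactorial_mul_monomialFn_eq_zero {β δ : Fin n → ℕ} {x : En n} (hne : δ ≠ β)
    (h : x = 0 ∨ ∑ i, δ i ≤ ∑ i, β i) :
    ((∏ k, (δ k).descFactorial (β k) : ℕ) : ℝ) * monomialFn (δ - β) x = 0 := by
  by_cases hle : β ≤ δ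
  · refine mul_eq_zero_of_right _ ?_
    rcases h with rfl | hsum
    · obtain ⟨k, hk⟩ : ∃ k, (δ - β) k ≠ 0 := by
        by_contra! h0
        exact hne (le_antisymm (tsub_eq_zero_iff_le.1 (funext h0)) hle)
      exact Finset.prod_eq_zero (Finset.mem_univ k) (by simpa using hk)
    · have heq := (Finset.sum_eq_sum_iff_of_le fun k _ => hle k).1
        (le_antisymm (Finset.sum_le_sum fun k _ => hle k) hsum)
      exact absurd (funext fun k => (heq k (Finset.mem_univ k)).symm) hne
  · obtain ⟨k, hk⟩ : ∃ k, δ k < β k := by simpa [Pi.le_def] using hle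
    rw [Finset.prod_eq_zero (Finset.mem_univ k) (Nat.descFactorial_eq_zero_iff_lt.2 hk),
      Nat.cast_zero, zero_mul]

lemma mem_multiIdx {m : ℕ} {β : Fin n → ℕ} : β ∈ multiIdx n m ↔ ∑ i, β i ≤ m := by
  refine ⟨fun h => (Finset.mem_filter.1 h).2, fun h => Finset.mem_filter.2 ⟨?_, h⟩⟩
  exact Fintype.mem_piFinset.2 fun i => Finset.mem_range_succ_iff.2
    ((Finset.single_le_sum (fun j _ => Nat.zero_le (β j)) (Finset.mem_univ i)).trans h)

lemma pdM_taylorPoly_apply_eq {m : ℕ} (f : En n → ℝ) {β : Fin n → ℕ} (hβ : ∑ i, β i ≤ m)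
    {x : En n} (h : x = 0 ∨ m ≤ ∑ i, β i) : pdM β (taylorPoly m f) x = pdM β f 0 := by
  simp only [pdM_taylorPoly]
  rw [Finset.sum_eq_single_of_mem β (mem_multiIdx.2 hβ)]
  · have hfac : (∏ i, ((β i).factorial : ℝ)) ≠ 0 := by positivity
    simp only [Nat.descFactorial_self, Nat.cast_prod, monomialFn, Pi.sub_apply, tsub_self,
      pow_zero, Finset.prod_const_one, mul_one]
    field_simp
  · intro δ hδ hne
    rw [mul_assoc, prod_descFactorial_mul_monomialFn_eq_zero hne, mul_zero]
    exact h.imp_right (mem_multiIdx.1 hδ).trans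

def remainderCoeff (c : (Fin n → ℕ) → ℝ) (k : ℕ) (β : Fin n → ℕ) : ℝ :=
  ∑ γ ∈ Finset.Nat.antidiagonalTuple n k, (∏ i, ((γ i).factorial : ℝ))⁻¹ * c (γ + β)

lemma remainderCoeff_zero (c : (Fin n → ℕ) → ℝ) (β : Fin n → ℕ) : remainderCoeff c 0 β = c β := by
  simp [remainderCoeff, Finset.Nat.antidiagonalTuple_zero_right]

lemma remainderCoeff_add_single (c : (Fin n → ℕ) → ℝ) (k : ℕ) (β : Fin n → ℕ) (i : Fin n) :
    remainderCoeff c k (β + Pi.single i 1) = ∑ γ ∈ Finset.Nat.antidiagonalTuple n (k + 1),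
      (γ i : ℝ) * ((∏ j, ((γ j).factorial : ℝ))⁻¹ * c (γ + β)) := by
  -- `γ ↦ γ + eᵢ` is a bijection onto the `γ` of weight `k + 1` with `γ i ≠ 0`.
  rw [remainderCoeff]
  refine Eq.trans ?_ (Finset.sum_filter_of_ne (p := fun γ => γ i ≠ 0) fun γ _ h h0 => by
    simp [h0] at h)
  refine Finset.sum_nbij' (· + Pi.single i 1) (· - Pi.single i 1) ?_ ?_
    (fun γ _ => add_tsub_cancel_right γ _)
    (fun γ hγ => tsub_single_add_single (Finset.mem_filter.1 hγ).2) ?_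
  · intro γ hγ
    refine Finset.mem_filter.2 ⟨Finset.Nat.mem_antidiagonalTuple.2 ?_, by simp⟩
    rw [sum_add_single, Finset.Nat.mem_antidiagonalTuple.1 hγ]
  · intro γ hγ
    simp only [Finset.mem_filter, Finset.Nat.mem_antidiagonalTuple] at hγ ⊢
    have := sum_add_single (γ - Pi.single i 1) i
    rw [tsub_single_add_single hγ.2, hγ.1] at this
    omega
  · intro γ _
    have hfac : ∏ j, (((γ + Pi.single i 1 : Fin n → ℕ) j).factorial : ℝ) =
        (γ i + 1) * ∏ j, ((γ j).factorial : ℝ) := by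
      rw [prod_apply_eq_mul_prod_erase (fun _ m => (m.factorial : ℝ)) i (β := γ)
        (fun j hj => by simp [hj]), ← Finset.mul_prod_erase _ _ (Finset.mem_univ i)]
      simp [Nat.factorial_succ, mul_assoc]
    rw [hfac, add_right_comm, ← add_assoc]
    simp only [Pi.add_apply, Pi.single_eq_same, Nat.cast_add, Nat.cast_one, mul_inv_rev]
    field_simp

lemma sum_remainderCoeff_add_single (c : (Fin n → ℕ) → ℝ) (k : ℕ) (β : Fin n → ℕ) :
    ∑ i, remainderCoeff c k (β + Pi.single i 1) = (k + 1) * remainderCoeff c (k + 1) β := by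
  simp only [remainderCoeff_add_single]
  rw [remainderCoeff, Finset.sum_comm, Finset.mul_sum]
  refine Finset.sum_congr rfl fun γ hγ => ?_
  rw [← Finset.sum_mul, ← Nat.cast_sum, Finset.Nat.mem_antidiagonalTuple.1 hγ]
  push_cast
  ring

lemma abs_sub_le_of_abs_deriv_le_rpow {h h' : ℝ → ℝ} {K q : ℝ} (hq : 0 ≤ q)
    (hcont : ContinuousOn h (Set.Icc 0 1)) (hder : ∀ t ∈ Set.Ico (0 : ℝ) 1, HasDerivAt h (h' t) t)
    (hbound : ∀ t ∈ Set.Ico (0 : ℝ) 1, |h' t| ≤ K * t ^ q) :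
    |h 1 - h 0| ≤ K / (q + 1) := by
  have hq1 : q + 1 ≠ 0 := by positivity
  have hB : ∀ t, HasDerivAt (fun t => K / (q + 1) * t ^ (q + 1)) (K * t ^ q) t := fun t =>
    ((Real.hasDerivAt_rpow_const (Or.inr (by linarith))).const_mul _).congr_deriv (by
      rw [add_sub_cancel_right]
      field_simp)
  have := image_norm_le_of_norm_deriv_right_le_deriv_boundary (hcont.sub continuousOn_const)
    (fun t ht => ((hder t ht).sub_const (h 0)).hasDerivWithinAt) (by simp [Real.zero_rpow hq1])
    hB hbound (Set.right_mem_Icc.2 zero_le_one)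
  simpa using this

lemma fderiv_apply_eq_sum_pd (g : En n → ℝ) (y x : En n) :
    fderiv ℝ g y x = ∑ i, x i * pd i g y := by
  conv_lhs => rw [← (EuclideanSpace.basisFun (Fin n) ℝ).sum_repr x]
  simp [pd, map_sum]

lemma abs_pdM_le_of_abs_pdM_add_single_le {R : En n → ℝ} {a q : ℝ} {β : Fin n → ℕ}
    {S : Fin n → ℝ} (hq : 0 ≤ q) (hR : ContDiffOn ℝ (∑ i, β i + 1 : ℕ) R (Metric.ball 0 a))
    (h0 : pdM β R 0 = 0)
    (hS : ∀ i, ∀ y ∈ Metric.ball (0 : En n) a, |pdM (β + Pi.single i 1) R y| ≤ ‖y‖ ^ q * S i)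
    {x : En n} (hx : x ∈ Metric.ball (0 : En n) a) :
    |pdM β R x| ≤ ‖x‖ ^ (q + 1) * (∑ i, S i) / (q + 1) := by
  have hU : IsOpen (Metric.ball (0 : En n) a) := Metric.isOpen_ball
  have hseg : ∀ t ∈ Set.Icc (0 : ℝ) 1, t • x ∈ Metric.ball (0 : En n) a := fun t ht =>
    (convex_ball 0 a).smul_mem_of_zero_mem (Metric.mem_ball_self (Metric.pos_of_mem_ball hx))
      hx ht
  have hcont : ContinuousOn (fun t : ℝ => pdM β R (t • x)) (Set.Icc 0 1) :=
    (pdM_contDiffOn (k := 1) hU β hR).continuousOn.comp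
      (continuous_id.smul continuous_const).continuousOn hseg
  have hder : ∀ t ∈ Set.Ico (0 : ℝ) 1, HasDerivAt (fun t : ℝ => pdM β R (t • x))
      (∑ i, x i * pdM (β + Pi.single i 1) R (t • x)) t := by
    intro t ht
    have htx := hseg t (Set.Ico_subset_Icc_self ht)
    refine ((pdM_differentiableAt hU β hR htx).hasFDerivAt.comp_hasDerivAt t
      ((hasDerivAt_id t).smul_const x)).congr_deriv ?_
    simp [fderiv_apply_eq_sum_pd, pdM_add_single hU β _ hR htx]
  refine (abs_sub_le_of_abs_deriv_le_rpow hq hcont hder fun t ht => ?_).trans_eq' (by simp [h0])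
  have htx := hseg t (Set.Ico_subset_Icc_self ht)
  calc |∑ i, x i * pdM (β + Pi.single i 1) R (t • x)|
      ≤ ∑ i, ‖x‖ * (‖t • x‖ ^ q * S i) := by
        refine (Finset.abs_sum_le_sum_abs _ _).trans (Finset.sum_le_sum fun i _ => ?_)
        rw [abs_mul]
        exact mul_le_mul (PiLp.norm_apply_le x i) (hS i _ htx) (abs_nonneg _) (norm_nonneg x)
    _ = ‖x‖ ^ (q + 1) * (∑ i, S i) * t ^ q := by
        rw [norm_smul, Real.norm_of_nonneg ht.1, Real.mul_rpow ht.1 (norm_nonneg x),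
          Real.rpow_add_one' (norm_nonneg x) (by positivity), Finset.mul_sum, Finset.sum_mul]
        exact Finset.sum_congr rfl fun i _ => by ring

theorem abs_pdM_sub_taylorPoly_le {a α : ℝ} {m : ℕ} {f : En n → ℝ} {c : (Fin n → ℕ) → ℝ}
    (hα : 0 ≤ α) (hf : ContDiffOn ℝ m f (Metric.ball 0 a))
    (hH : ∀ δ : Fin n → ℕ, (∑ i, δ i) = m →
      ∀ x ∈ Metric.ball (0 : En n) a, |pdM δ f x - pdM δ f 0| ≤ c δ * ‖x‖ ^ α)
    (k : ℕ) {β : Fin n → ℕ} (hβ : ∑ i, β i + k = m) {x : En n} (hx : x ∈ Metric.ball 0 a) :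
    |pdM β (fun y => f y - taylorPoly m f y) x| ≤ ‖x‖ ^ (k + α) * remainderCoeff c k β := by
  have hR : ContDiffOn ℝ m (fun y => f y - taylorPoly m f y) (Metric.ball 0 a) :=
    hf.sub (contDiff_taylorPoly m f).contDiffOn
  have hsub : ∀ β : Fin n → ℕ, ∑ i, β i ≤ m → ∀ y ∈ Metric.ball 0 a,
      pdM β (fun y => f y - taylorPoly m f y) y = pdM β f y - pdM β (taylorPoly m f) y :=
    fun β hβ y hy => pdM_sub Metric.isOpen_ball β (hf.of_le (by exact_mod_cast hβ))
      (contDiff_taylorPoly m f).contDiffOn hy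
  induction k generalizing β x with
  | zero =>
    rw [hsub β hβ.le x hx, pdM_taylorPoly_apply_eq f hβ.le (Or.inr hβ.ge), remainderCoeff_zero,
      Nat.cast_zero, zero_add, mul_comm]
    exact hH β hβ x hx
  | succ k ih =>
    have h0 : pdM β (fun y => f y - taylorPoly m f y) 0 = 0 := by
      rw [hsub β (by omega) 0 (Metric.mem_ball_self (Metric.pos_of_mem_ball hx)),
        pdM_taylorPoly_apply_eq f (by omega) (Or.inl rfl), sub_self]
    have hstep := abs_pdM_le_of_abs_pdM_add_single_le (by positivity)
      (hR.of_le (by exact_mod_cast (by omega : ∑ i, β i + 1 ≤ m))) h0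
      (fun i y hy => ih (by rw [sum_add_single]; omega) hy) hx
    rw [sum_remainderCoeff_add_single] at hstep
    rw [Nat.cast_succ, add_right_comm]
    set B := ‖x‖ ^ ((k : ℝ) + α + 1) * remainderCoeff c (k + 1) β
    have hratio : 0 < ((k : ℝ) + 1) / (k + α + 1) := by positivity
    replace hstep : |pdM β (fun y => f y - taylorPoly m f y) x| ≤ (k + 1) / (k + α + 1) * B :=
      hstep.trans_eq (by ring)
    have hB : 0 ≤ B := nonneg_of_mul_nonneg_right ((abs_nonneg _).trans hstep) hratio
    exact hstep.trans (mul_le_of_le_one_left hB ((div_le_one (by positivity)).2 (by linarith)))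

lemma remainderCoeff_eq_sum_filter {m : ℕ} (c : (Fin n → ℕ) → ℝ) {β : Fin n → ℕ}
    (hβ : ∑ i, β i ≤ m) :
    remainderCoeff c (m - ∑ i, β i) β =
      ∑ γ ∈ (Fintype.piFinset fun _ : Fin n => Finset.range (m + 1)).filter
          (fun γ => (∑ i, γ i) + (∑ i, β i) = m),
        (∏ i, ((γ i).factorial : ℝ))⁻¹ * c (fun i => γ i + β i) := by
  refine Finset.sum_congr (Finset.ext fun γ => ?_) fun _ _ => rfl
  rw [Finset.Nat.mem_antidiagonalTuple, Finset.mem_filter, Fintype.mem_piFinset]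
  refine ⟨fun h => ⟨fun i => Finset.mem_range_succ_iff.2 ?_, by omega⟩, fun h => by omega⟩
  exact (Finset.single_le_sum (fun j _ => Nat.zero_le (γ j)) (Finset.mem_univ i)).trans (by omega)

theorem stmt_4_general (n : ℕ) (a : ℝ) (m : ℕ) (α : ℝ) (hα0 : 0 < α)
    (f : En n → ℝ) (hf : ContDiffOn ℝ (m : ℕ∞) f (Metric.ball 0 a))
    (c : (Fin n → ℕ) → ℝ)
    (hH : ∀ δ : Fin n → ℕ, (∑ i, δ i) = m →
      ∀ x ∈ Metric.ball (0 : En n) a, |pdM δ f x - pdM δ f 0| ≤ c δ * ‖x‖ ^ α)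
    (β : Fin n → ℕ) (hβ : (∑ i, β i) ≤ m)
    (x : En n) (hx : x ∈ Metric.ball (0 : En n) a) :
    |pdM β (fun y => f y - taylorPoly m f y) x| ≤
      ‖x‖ ^ ((m : ℝ) + α - ((∑ i, β i : ℕ) : ℝ)) *
        ∑ γ ∈ (Fintype.piFinset fun _ : Fin n => Finset.range (m + 1)).filter
            (fun γ => (∑ i, γ i) + (∑ i, β i) = m),
          (∏ i, (Nat.factorial (γ i) : ℝ))⁻¹ * c (fun i => γ i + β i) := by
  have hexp : (m : ℝ) + α - ((∑ i, β i : ℕ) : ℝ) = ((m - ∑ i, β i : ℕ) : ℝ) + α := by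
    rw [Nat.cast_sub hβ]
    ring
  rw [hexp, ← remainderCoeff_eq_sum_filter c hβ]
  exact abs_pdM_sub_taylorPoly_le hα0.le (by exact_mod_cast hf) hH _ (Nat.add_sub_cancel' hβ) hx

/-- Hölder estimate for the Taylor remainder.  If `f ∈ Cᵐ(U)` on the open
ball `U = B(0,a) ⊆ ℝⁿ`, `0 < α ≤ 1`, and the order-`m` derivatives satisfy
`|∂^δ f(x) − ∂^δ f(0)| ≤ c_δ ‖x‖^α` on `U`, then for every multi-index `β` with
`|β| ≤ m` and every `x ∈ U`,
`|∂^β (f − T_m f)(x)| ≤ ‖x‖^(m+α−|β|) Σ_{|γ| = m−|β|} (1/γ!) c_{γ+β}`. -/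
theorem stmt_4 (n : ℕ) (a : ℝ) (ha : 0 < a) (m : ℕ) (α : ℝ) (hα0 : 0 < α) (hα1 : α ≤ 1)
    (f : En n → ℝ) (hf : ContDiffOn ℝ (m : ℕ∞) f (Metric.ball 0 a))
    (c : (Fin n → ℕ) → ℝ) (hc : ∀ δ, 0 ≤ c δ)
    (hH : ∀ δ : Fin n → ℕ, (∑ i, δ i) = m →
      ∀ x ∈ Metric.ball (0 : En n) a, |pdM δ f x - pdM δ f 0| ≤ c δ * ‖x‖ ^ α)
    (β : Fin n → ℕ) (hβ : (∑ i, β i) ≤ m)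
    (x : En n) (hx : x ∈ Metric.ball (0 : En n) a) :
    |pdM β (fun y => f y - taylorPoly m f y) x| ≤
      ‖x‖ ^ ((m : ℝ) + α - ((∑ i, β i : ℕ) : ℝ)) *
        ∑ γ ∈ (Fintype.piFinset fun _ : Fin n => Finset.range (m + 1)).filter
            (fun γ => (∑ i, γ i) + (∑ i, β i) = m),
          (∏ i, (Nat.factorial (γ i) : ℝ))⁻¹ * c (fun i => γ i + β i) :=
  stmt_4_general n a m α hα0 f hf c hH β hβ x hx
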